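/- arXiv:2308.10197 — 2 statements merged into one kernel-verified Lean document; each statement's English description precedes it below -/
import Mathlib

section
/- Let N_{j,t} count the draws of color c_j up to time t in the expanding-color Pólya urn, and fix 1 ≤ k ≤ t−j+1 and 1 < j ≤ t. Then P(N_{j,t} = k) = Σ over tuples (i_1 < i_2 < ⋯ < i_k) with j ≤ i_1 and i_k ≤ t of [∏_{a=1}^{k} (1 + Σ_{b=1}^{a−1} Δ_{i_b}) · ∏_{p=j, p ∉ {i_1,…,i_k}}^{t} ((p−1) + Σ_{l=1, l ∉ {i_1,…,i_k}}^{p−1} Δ_l)] / ∏_{n=j−1}^{t−1} ((n+1) + Σ_{m=1}^{n} Δ_m). -/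
/-!
Write `E_N(S)` for the event that, among the times `j, …, N`, colour `c_j` is drawn exactly at
the times in `S`. Given the whole history up to time `N`, the probability of drawing `c_j` at time
`N + 1` is `(1 + ∑_{i ∈ S, i ≤ N} Δ_i) / (N + 1 + ∑_{1 ≤ m ≤ N} Δ_m)` on every history lying in
`E_N(S)`: it sees the history only through `S`. Summing the model's cylinder identity over the
countably many histories in `E_N(S)` therefore gives `P(E_{N+1}(S)) = p_{N+1} · P(E_N(S))`, with
`p_{N+1}` this ratio or its complement, and `P(E_t(S))` is the product of these factors over
`j ≤ n ≤ t`. The event `{N_{j,t} = k}` is the disjoint union of the `E_t(S)` with `|S| = k`.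
-/

open MeasureTheory Finset

/-- Proportion of `c_j`-colored balls in the urn just before the `n`-th draw, given the
history `h` of past draws. -/
noncomputable def urnRatio (Δ : ℕ → ℝ) (j n : ℕ) (h : ℕ → ℕ) : ℝ :=
  (1 + ∑ m ∈ Finset.Icc j (n - 1), Δ m * (if h m = j then 1 else 0)) /
    ((n : ℝ) + ∑ k ∈ Finset.Icc 1 (n - 1), Δ k)

/-- Number of times color `c_j` is drawn up to and including time `t`. -/
noncomputable def drawCount (D : ℕ → Ω → ℕ) (j t : ℕ) (ω : Ω) : ℕ :=
  ((Finset.Icc j t).filter fun n => D n ω = j).card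

open scoped ENNReal

section Measure

variable {Ω : Type*} [MeasurableSpace Ω] {μ : Measure Ω}

theorem measure_inter_preimage_eq_mul {β : Type*} [Countable β] [MeasurableSpace β]
    [MeasurableSingletonClass β] {f : Ω → β} (hf : Measurable f) {A : Set Ω}
    (hA : MeasurableSet A) {s : Set β} {c : ℝ≥0∞}
    (h : ∀ b ∈ s, μ (A ∩ f ⁻¹' {b}) = c * μ (f ⁻¹' {b})) :
    μ (A ∩ f ⁻¹' s) = c * μ (f ⁻¹' s) := by
  have hfib : ∀ b ∈ s, MeasurableSet (f ⁻¹' {b}) := fun b _ => hf (measurableSet_singleton b)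
  have hdisj : s.PairwiseDisjoint (fun b => f ⁻¹' {b}) :=
    fun b _ b' _ hne => (Set.disjoint_singleton.2 hne).preimage f
  rw [← Set.biUnion_preimage_singleton, Set.inter_iUnion₂,
    measure_biUnion s.to_countable (hdisj.mono fun b => Set.inter_subset_right)
      fun b hb => hA.inter (hfib b hb),
    measure_biUnion s.to_countable hdisj hfib, ← ENNReal.tsum_mul_left]
  exact tsum_congr fun b => h b b.2

theorem measure_compl_inter_eq_ofReal_one_sub_mul [IsFiniteMeasure μ] {A E : Set Ω}
    (hA : MeasurableSet A) {r : ℝ} (hr : 0 ≤ r) (h : μ (A ∩ E) = ENNReal.ofReal r * μ E) :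
    μ (Aᶜ ∩ E) = ENNReal.ofReal (1 - r) * μ E := by
  rw [Set.inter_comm, ← Set.sdiff_eq,
    ENNReal.eq_sub_of_add_eq (measure_ne_top μ _) (measure_sdiff_add_inter E hA), Set.inter_comm,
    h, ENNReal.ofReal_sub 1 hr, ENNReal.ofReal_one, ENNReal.sub_mul fun _ _ => measure_ne_top μ E,
    one_mul]

end Measure

/-- The urn holds one ball of each colour `c_1, …, c_n` before draw `n`, plus the `Δ m` balls added
at each earlier draw `m`. -/
noncomputable def ballCount (Δ : ℕ → ℝ) (n : ℕ) : ℝ :=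
  n + ∑ m ∈ Icc 1 (n - 1), Δ m

/-- Numerator, over `ballCount Δ n`, of the conditional probability that at time `n` colour `c_j` is
drawn iff `n ∈ T`, given that before `n` it was drawn exactly at the times of `T` (all `≥ j`). -/
noncomputable def stepWeight (Δ : ℕ → ℝ) (T : Finset ℕ) (n : ℕ) : ℝ :=
  if n ∈ T then 1 + ∑ i ∈ T with i < n, Δ i else ((n : ℝ) - 1) + ∑ l ∈ Icc 1 (n - 1) \ T, Δ l

section Weights

variable {Δ : ℕ → ℝ} {T : Finset ℕ} {n : ℕ}

theorem ballCount_pos (hΔ : ∀ n, 1 ≤ n → 0 ≤ Δ n) (hn : 1 ≤ n) : 0 < ballCount Δ n := by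
  have : 0 ≤ ∑ m ∈ Icc 1 (n - 1), Δ m := sum_nonneg fun m hm => hΔ m (mem_Icc.1 hm).1
  have : (1 : ℝ) ≤ n := by exact_mod_cast hn
  unfold ballCount; linarith

theorem sum_filter_lt_nonneg (hΔ : ∀ n, 1 ≤ n → 0 ≤ Δ n) (hT : ∀ i ∈ T, 1 ≤ i) :
    0 ≤ ∑ i ∈ T with i < n, Δ i :=
  sum_nonneg fun i hi => hΔ i (hT i (mem_filter.1 hi).1)

theorem stepWeight_div_ballCount_nonneg (hΔ : ∀ n, 1 ≤ n → 0 ≤ Δ n) (hT : ∀ i ∈ T, 1 ≤ i)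
    (hn : 1 ≤ n) :
    0 ≤ stepWeight Δ T n / ballCount Δ n := by
  refine div_nonneg ?_ (ballCount_pos hΔ hn).le
  have : (1 : ℝ) ≤ n := by exact_mod_cast hn
  have := sum_filter_lt_nonneg hΔ (n := n) hT
  have : 0 ≤ ∑ l ∈ Icc 1 (n - 1) \ T, Δ l :=
    sum_nonneg fun l hl => hΔ l (mem_Icc.1 (mem_sdiff.1 hl).1).1
  unfold stepWeight; split_ifs <;> linarith

theorem one_sub_div_ballCount (hΔ : ∀ n, 1 ≤ n → 0 ≤ Δ n) (hT : ∀ i ∈ T, 1 ≤ i) (hn : 1 ≤ n) :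
    1 - (1 + ∑ i ∈ T with i < n, Δ i) / ballCount Δ n =
      (((n : ℝ) - 1) + ∑ l ∈ Icc 1 (n - 1) \ T, Δ l) / ballCount Δ n := by
  have hsplit : ∑ m ∈ Icc 1 (n - 1), Δ m =
      ∑ i ∈ T with i < n, Δ i + ∑ l ∈ Icc 1 (n - 1) \ T, Δ l := by
    rw [← sum_filter_add_sum_filter_not (Icc 1 (n - 1)) (· ∈ T), filter_notMem_eq_sdiff]
    congr 2
    ext i
    simp only [mem_filter, mem_Icc]
    constructor
    · rintro ⟨⟨-, hi⟩, hiT⟩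
      exact ⟨hiT, by omega⟩
    · rintro ⟨hiT, hi⟩
      exact ⟨⟨hT i hiT, by omega⟩, hiT⟩
  rw [one_sub_div (ballCount_pos hΔ hn).ne', ballCount, hsplit]
  ring_nf

end Weights

def drawPattern {Ω : Type*} (D : ℕ → Ω → ℕ) (j N : ℕ) (T : Finset ℕ) : Set Ω :=
  {ω | ∀ m ∈ Icc j N, D m ω = j ↔ m ∈ T}

def history {Ω : Type*} (D : ℕ → Ω → ℕ) (N : ℕ) (ω : Ω) : Fin N → ℕ :=
  fun i => D (i + 1) ω

theorem urnRatio_succ_eq {Δ : ℕ → ℝ} {j N : ℕ} {T : Finset ℕ} (hT : ∀ i ∈ T, j ≤ i) {h : ℕ → ℕ}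
    (hh : ∀ m ∈ Icc j N, h m = j ↔ m ∈ T) :
    urnRatio Δ j (N + 1) h = (1 + ∑ i ∈ T with i < N + 1, Δ i) / ballCount Δ (N + 1) := by
  have hfilter : {i ∈ T | i < N + 1} = {m ∈ Icc j N | h m = j} := by
    ext i
    simp only [mem_filter, mem_Icc]
    constructor
    · rintro ⟨hiT, hi⟩
      have hiIcc : i ∈ Icc j N := mem_Icc.2 ⟨hT i hiT, by omega⟩
      exact ⟨mem_Icc.1 hiIcc, (hh i hiIcc).2 hiT⟩
    · rintro ⟨hi, hij⟩
      exact ⟨(hh i (mem_Icc.2 hi)).1 hij, by omega⟩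
  simp only [urnRatio, ballCount, mul_ite, mul_one, mul_zero, ← sum_filter, hfilter,
    Nat.add_sub_cancel]

section History

variable {Ω : Type*} {D : ℕ → Ω → ℕ} {N : ℕ}

theorem history_eq_iff {ω ω' : Ω} :
    history D N ω = history D N ω' ↔ ∀ m, 1 ≤ m → m < N + 1 → D m ω = D m ω' := by
  constructor
  · intro h m hm1 hmN
    simpa [history, Nat.sub_add_cancel hm1] using congrFun h ⟨m - 1, by omega⟩
  · intro h
    funext i
    exact h _ (Nat.le_add_left 1 _) (by omega)

theorem preimage_image_history_drawPattern {j : ℕ} (hj : 1 ≤ j) (T : Finset ℕ) :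
    history D N ⁻¹' (history D N '' drawPattern D j N T) = drawPattern D j N T := by
  refine Set.Subset.antisymm ?_ (Set.subset_preimage_image _ _)
  rintro ω ⟨ω', hω', hhist⟩ m hm
  have hm' := mem_Icc.1 hm
  rw [← hω' m hm, history_eq_iff.1 hhist m (by omega) (by omega)]

theorem drawPattern_succ {j : ℕ} (hjN : j ≤ N + 1) (T : Finset ℕ) :
    drawPattern D j (N + 1) T = {ω | D (N + 1) ω = j ↔ N + 1 ∈ T} ∩ drawPattern D j N T := by
  ext ω
  simp only [drawPattern, Set.mem_ofPred_eq, Set.mem_inter_iff,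
    ← insert_Icc_right_eq_Icc_add_one hjN, forall_mem_insert]

variable [MeasurableSpace Ω]

theorem measurable_history (hD : ∀ n, Measurable (D n)) : Measurable (history D N) :=
  measurable_pi_lambda _ fun _ => hD _

theorem measurableSet_drawPattern (hD : ∀ n, Measurable (D n)) (j : ℕ) (T : Finset ℕ) :
    MeasurableSet (drawPattern D j N T) := by
  unfold drawPattern
  measurability

end History

def IsUrnModel {Ω : Type*} [MeasurableSpace Ω] (μ : Measure Ω) (Δ : ℕ → ℝ) (D : ℕ → Ω → ℕ) :
    Prop :=
  ∀ n, 1 ≤ n → ∀ j, 1 ≤ j → j ≤ n → ∀ h : ℕ → ℕ,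
    μ ({ω | D n ω = j} ∩ {ω | ∀ m, 1 ≤ m → m < n → D m ω = h m}) =
      ENNReal.ofReal (urnRatio Δ j n h) * μ {ω | ∀ m, 1 ≤ m → m < n → D m ω = h m}

section Urn

variable {Ω : Type*} [MeasurableSpace Ω] {μ : Measure Ω} {Δ : ℕ → ℝ} {D : ℕ → Ω → ℕ}
  {j N : ℕ} {T : Finset ℕ}

theorem measure_draw_inter_drawPattern (hD : ∀ n, Measurable (D n))
    (hmodel : IsUrnModel μ Δ D) (hj : 1 ≤ j) (hjN : j ≤ N + 1) (hT : ∀ i ∈ T, j ≤ i) :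
    μ ({ω | D (N + 1) ω = j} ∩ drawPattern D j N T) =
      ENNReal.ofReal ((1 + ∑ i ∈ T with i < N + 1, Δ i) / ballCount Δ (N + 1)) *
        μ (drawPattern D j N T) := by
  rw [← preimage_image_history_drawPattern hj T]
  refine measure_inter_preimage_eq_mul (measurable_history hD)
    (hD (N + 1) (measurableSet_singleton j)) ?_
  rintro _ ⟨ω₀, hω₀, rfl⟩
  have hcyl : history D N ⁻¹' {history D N ω₀} =
      {ω | ∀ m, 1 ≤ m → m < N + 1 → D m ω = D m ω₀} := by
    ext ω
    exact history_eq_iff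
  rw [hcyl, ← urnRatio_succ_eq hT hω₀]
  exact hmodel (N + 1) (Nat.le_add_left 1 N) j hj hjN _

theorem measure_drawPattern_succ [IsProbabilityMeasure μ] (hD : ∀ n, Measurable (D n))
    (hmodel : IsUrnModel μ Δ D) (hΔ : ∀ n, 1 ≤ n → 0 ≤ Δ n)
    (hj : 1 ≤ j) (hjN : j ≤ N + 1) (hT : ∀ i ∈ T, j ≤ i) :
    μ (drawPattern D j (N + 1) T) =
      ENNReal.ofReal (stepWeight Δ T (N + 1) / ballCount Δ (N + 1)) *
        μ (drawPattern D j N T) := by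
  have hT1 : ∀ i ∈ T, 1 ≤ i := fun i hi => hj.trans (hT i hi)
  have hdraw := measure_draw_inter_drawPattern hD hmodel hj hjN hT
  rw [drawPattern_succ hjN, stepWeight]
  by_cases hN : N + 1 ∈ T
  · have hevent : {ω | D (N + 1) ω = j ↔ N + 1 ∈ T} = {ω | D (N + 1) ω = j} := by simp [hN]
    rwa [hevent, if_pos hN]
  · have hevent : {ω | D (N + 1) ω = j ↔ N + 1 ∈ T} = {ω | D (N + 1) ω = j}ᶜ := by
      ext; simp [hN]
    have hratio : 0 ≤ (1 + ∑ i ∈ T with i < N + 1, Δ i) / ballCount Δ (N + 1) :=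
      div_nonneg (by linarith [sum_filter_lt_nonneg hΔ (n := N + 1) hT1])
        (ballCount_pos hΔ (Nat.le_add_left 1 N)).le
    rw [hevent, if_neg hN, ← one_sub_div_ballCount hΔ hT1 (Nat.le_add_left 1 N)]
    exact measure_compl_inter_eq_ofReal_one_sub_mul (hD _ (measurableSet_singleton j)) hratio hdraw

theorem measure_drawPattern [IsProbabilityMeasure μ] (hD : ∀ n, Measurable (D n))
    (hmodel : IsUrnModel μ Δ D) (hΔ : ∀ n, 1 ≤ n → 0 ≤ Δ n)
    (hj : 1 ≤ j) (hT : ∀ i ∈ T, j ≤ i) (hN : j - 1 ≤ N) :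
    μ (drawPattern D j N T) =
      ENNReal.ofReal (∏ n ∈ Icc j N, stepWeight Δ T n / ballCount Δ n) := by
  induction N, hN using Nat.le_induction with
  | base =>
    have hempty : Icc j (j - 1) = ∅ := Icc_eq_empty (by omega)
    simp [drawPattern, hempty]
  | succ N hN ih =>
    have hjN : j ≤ N + 1 := by omega
    have hfactor := stepWeight_div_ballCount_nonneg hΔ (fun i hi => hj.trans (hT i hi))
      (Nat.le_add_left 1 N)
    rw [measure_drawPattern_succ hD hmodel hΔ hj hjN hT, ih, ← ENNReal.ofReal_mul hfactor,
      ← insert_Icc_right_eq_Icc_add_one hjN, prod_insert (by simp)]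

end Urn

section Decomposition

variable {Ω : Type*} {D : ℕ → Ω → ℕ} {j N : ℕ}

theorem mem_drawPattern_iff {S : Finset ℕ} (hS : S ⊆ Icc j N) {ω : Ω} :
    ω ∈ drawPattern D j N S ↔ {n ∈ Icc j N | D n ω = j} = S := by
  simp only [drawPattern, Set.mem_ofPred_eq, Finset.ext_iff, mem_filter]
  constructor
  · intro h m
    exact ⟨fun hm => (h m hm.1).1 hm.2, fun hm => ⟨hS hm, (h m (hS hm)).2 hm⟩⟩
  · intro h m hm
    exact ⟨fun hD => (h m).1 ⟨hm, hD⟩, fun hmS => ((h m).2 hmS).2⟩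

theorem setOf_drawCount_eq (k : ℕ) :
    {ω | drawCount D j N ω = k} = ⋃ S ∈ powersetCard k (Icc j N), drawPattern D j N S := by
  ext ω
  simp only [Set.mem_ofPred_eq, Set.mem_iUnion, mem_powersetCard, exists_prop]
  constructor
  · intro hk
    exact ⟨_, ⟨filter_subset _ _, hk⟩, (mem_drawPattern_iff (filter_subset _ _)).2 rfl⟩
  · rintro ⟨S, ⟨hS, hk⟩, hω⟩
    rwa [drawCount, (mem_drawPattern_iff hS).1 hω]

theorem pairwiseDisjoint_drawPattern :
    {S : Finset ℕ | S ⊆ Icc j N}.PairwiseDisjoint (drawPattern D j N) := by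
  intro S hS S' hS' hne
  refine Set.disjoint_left.2 fun ω hω hω' => hne ?_
  rw [← (mem_drawPattern_iff hS).1 hω, (mem_drawPattern_iff hS').1 hω']

end Decomposition

theorem prod_stepWeight {Δ : ℕ → ℝ} {S s : Finset ℕ} (hS : S ⊆ s) :
    ∏ n ∈ s, stepWeight Δ S n =
      (∏ i ∈ S, (1 + ∑ i' ∈ S with i' < i, Δ i')) *
        ∏ p ∈ s \ S, (((p : ℝ) - 1) + ∑ l ∈ Icc 1 (p - 1) \ S, Δ l) := by
  simp only [stepWeight]
  rw [prod_ite, filter_mem_eq_inter, inter_eq_right.2 hS, filter_notMem_eq_sdiff]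

theorem prod_ballCount (Δ : ℕ → ℝ) {j t : ℕ} (hj : 1 ≤ j) (hjt : j ≤ t) :
    ∏ n ∈ Icc j t, ballCount Δ n =
      ∏ n ∈ Icc (j - 1) (t - 1), (((n : ℝ) + 1) + ∑ m ∈ Icc 1 n, Δ m) := by
  have hshift : Icc j t = (Icc (j - 1) (t - 1)).map (addRightEmbedding 1) := by
    rw [map_add_right_Icc]
    congr 1 <;> omega
  rw [hshift, prod_map]
  refine prod_congr rfl fun n _ => ?_
  simp [ballCount]

/-- The paper's tuple `i_1 < ⋯ < i_k` is the `k`-element set `S ⊆ Icc j t`, so that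
`∏_{a=1}^k (1 + ∑_{b<a} Δ_{i_b})` reads `∏ i ∈ S, (1 + ∑ i' ∈ S with i' < i, Δ i')`. -/
theorem prob_drawCount_eq_general
    {Ω : Type*} [MeasurableSpace Ω] (μ : Measure Ω) [IsProbabilityMeasure μ]
    (Δ : ℕ → ℝ) (hΔ : ∀ n, 1 ≤ n → 0 < Δ n)
    (D : ℕ → Ω → ℕ) (hD : ∀ n, Measurable (D n))
    (hmodel : ∀ n, 1 ≤ n → ∀ j, 1 ≤ j → j ≤ n → ∀ h : ℕ → ℕ,
      μ ({ω | D n ω = j} ∩ {ω | ∀ m, 1 ≤ m → m < n → D m ω = h m}) =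
        ENNReal.ofReal (urnRatio Δ j n h) *
          μ {ω | ∀ m, 1 ≤ m → m < n → D m ω = h m})
    (t j k : ℕ) (hj1 : 1 < j) (hjt : j ≤ t) :
    μ {ω | drawCount D j t ω = k} =
      ENNReal.ofReal
        (∑ S ∈ Finset.powersetCard k (Finset.Icc j t),
          ((∏ i ∈ S, (1 + ∑ i' ∈ S.filter (fun i' => i' < i), Δ i')) *
            ∏ p ∈ Finset.Icc j t \ S,
              (((p : ℝ) - 1) + ∑ l ∈ Finset.Icc 1 (p - 1) \ S, Δ l)) /
          ∏ n ∈ Finset.Icc (j - 1) (t - 1),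
            (((n : ℝ) + 1) + ∑ m ∈ Finset.Icc 1 n, Δ m)) := by
  have hj : 1 ≤ j := hj1.le
  have hΔ' : ∀ n, 1 ≤ n → 0 ≤ Δ n := fun n hn => (hΔ n hn).le
  have hsub : ∀ S ∈ powersetCard k (Icc j t), S ⊆ Icc j t :=
    fun S hS => (mem_powersetCard.1 hS).1
  have hge : ∀ S ∈ powersetCard k (Icc j t), ∀ i ∈ S, j ≤ i :=
    fun S hS i hi => (mem_Icc.1 (hsub S hS hi)).1
  rw [setOf_drawCount_eq, measure_biUnion_finset
      (pairwiseDisjoint_drawPattern.subset fun S hS => hsub S hS)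
      fun S _ => measurableSet_drawPattern hD j S,
    sum_congr rfl fun S hS =>
      measure_drawPattern (N := t) hD hmodel hΔ' hj (hge S hS) (by omega),
    ← ENNReal.ofReal_sum_of_nonneg fun S hS => prod_nonneg fun n hn =>
      stepWeight_div_ballCount_nonneg hΔ' (fun i hi => hj.trans (hge S hS i hi))
        (hj.trans (mem_Icc.1 hn).1)]
  refine congrArg ENNReal.ofReal (sum_congr rfl fun S hS => ?_)
  rw [prod_div_distrib, prod_stepWeight (hsub S hS), prod_ballCount Δ hj hjt]

/-- the distribution of the number of draws `N_{j,t}` of color `c_j` up to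
time `t`, for `1 < j ≤ t` and `1 ≤ k ≤ t - j + 1`.  A strictly increasing tuple
`(i_1 < ⋯ < i_k)` with `j ≤ i_1`, `i_k ≤ t` is encoded as a `k`-element subset `S` of
`Icc j t`; then `∏_{a=1}^k (1 + ∑_{b<a} Δ_{i_b}) = ∏_{i ∈ S} (1 + ∑_{i' ∈ S, i' < i} Δ i')`,
and `p ∉ {i_1,…,i_k}` (resp. `l ∉ {i_1,…,i_k}`) becomes `p ∉ S` (resp. `l ∉ S`). -/
theorem prob_drawCount_eq
    {Ω : Type*} [MeasurableSpace Ω] (μ : Measure Ω) [IsProbabilityMeasure μ]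
    (Δ : ℕ → ℝ) (hΔ : ∀ n, 1 ≤ n → 0 < Δ n)
    (D : ℕ → Ω → ℕ) (hD : ∀ n, Measurable (D n))
    (hrange : ∀ n ω, 1 ≤ n → D n ω ∈ Finset.Icc 1 n)
    (hmodel : ∀ n, 1 ≤ n → ∀ j, 1 ≤ j → j ≤ n → ∀ h : ℕ → ℕ,
      μ ({ω | D n ω = j} ∩ {ω | ∀ m, 1 ≤ m → m < n → D m ω = h m}) =
        ENNReal.ofReal (urnRatio Δ j n h) *
          μ {ω | ∀ m, 1 ≤ m → m < n → D m ω = h m})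
    (t j k : ℕ) (hj1 : 1 < j) (hjt : j ≤ t) (hk1 : 1 ≤ k) (hk : k ≤ t - j + 1) :
    μ {ω | drawCount D j t ω = k} =
      ENNReal.ofReal
        (∑ S ∈ Finset.powersetCard k (Finset.Icc j t),
          ((∏ i ∈ S, (1 + ∑ i' ∈ S.filter (fun i' => i' < i), Δ i')) *
            ∏ p ∈ Finset.Icc j t \ S,
              (((p : ℝ) - 1) + ∑ l ∈ Finset.Icc 1 (p - 1) \ S, Δ l)) /
          ∏ n ∈ Finset.Icc (j - 1) (t - 1),
            (((n : ℝ) + 1) + ∑ m ∈ Finset.Icc 1 n, Δ m)) :=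
  prob_drawCount_eq_general μ Δ hΔ D hD hmodel t j k hj1 hjt
end

section
/- For Δ > 0, t ≥ 1, and 1 ≤ j ≤ t, the following normalization identity holds: ∏_{p=j}^{t} (p−1)(Δ+1) + Σ_{k=1}^{t−j+1} Σ_{(i_1<⋯<i_k) ∈ A_{j,k}^{(t)}} [∏_{a=1}^{k} (1 + (a−1)Δ)] · [∏_{p=j, p ∉ {i_1,…,i_k}}^{t} ((p−1)(Δ+1) − Δ·#{l : i_l ≤ p−1})] = ∏_{n=j−1}^{t−1} ((Δ+1)n + 1). -/
open Finset


lemma aux_sum (Δ : ℝ) (j : ℕ) (hj1 : 1 ≤ j) :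
    ∀ t, j ≤ t →
    ∑ S ∈ (Finset.Icc j t).powerset,
      (∏ i ∈ S, (1 + ((S.filter (fun i' => i' < i)).card : ℝ) * Δ)) *
        ∏ p ∈ Finset.Icc j t \ S,
          (((p : ℝ) - 1) * (Δ + 1) - Δ * ((S.filter (fun l => l ≤ p - 1)).card : ℝ))
    = ∏ n ∈ Finset.Icc (j - 1) (t - 1), ((Δ + 1) * (n : ℝ) + 1) := by
  intro t ht
  induction t, ht using Nat.le_induction with
  | base =>
      rw [Finset.Icc_self, show ({j} : Finset ℕ) = insert j (∅ : Finset ℕ) from rfl,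
        Finset.sum_powerset_insert (by simp)]
      have h1 : Finset.filter (fun i' => i' < j) (insert j (∅ : Finset ℕ)) = ∅ := by
        ext x; simp; omega
      have h1' : Finset.filter (fun i' => i' < j) ({j} : Finset ℕ) = ∅ := by
        ext x; simp; omega
      have h2 : ((j - 1 : ℕ) : ℝ) = (j : ℝ) - 1 := by
        push_cast [Nat.cast_sub hj1]; ring
      simp [h1, h1', Finset.Icc_self, h2]
      ring
  | succ t ht ih =>
      have hnotmem : (t + 1) ∉ Finset.Icc j t := by simp
      rw [show Finset.Icc j (t + 1) = insert (t + 1) (Finset.Icc j t) by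
        ext x; simp [Finset.mem_Icc]; omega,
        Finset.sum_powerset_insert hnotmem]
      have key1 : ∀ S ∈ (Finset.Icc j t).powerset,
          (∏ i ∈ S, (1 + ((S.filter (fun i' => i' < i)).card : ℝ) * Δ)) *
            ∏ p ∈ insert (t + 1) (Finset.Icc j t) \ S,
              (((p : ℝ) - 1) * (Δ + 1) - Δ * ((S.filter (fun l => l ≤ p - 1)).card : ℝ))
          = ((∏ i ∈ S, (1 + ((S.filter (fun i' => i' < i)).card : ℝ) * Δ)) *
            ∏ p ∈ Finset.Icc j t \ S,
              (((p : ℝ) - 1) * (Δ + 1) - Δ * ((S.filter (fun l => l ≤ p - 1)).card : ℝ)))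
            * (((t : ℝ)) * (Δ + 1) - Δ * (S.card : ℝ)) := by
        intro S hS
        rw [Finset.mem_powerset] at hS
        have hns : (t + 1) ∉ S := fun h => hnotmem (hS h)
        have hsd : insert (t + 1) (Finset.Icc j t) \ S
            = insert (t + 1) (Finset.Icc j t \ S) := by
          rw [Finset.insert_sdiff_of_notMem _ hns]
        rw [hsd, Finset.prod_insert (by simp)]
        have hfS : S.filter (fun l => l ≤ t + 1 - 1) = S := by
          apply Finset.filter_true_of_mem
          intro x hx
          have := Finset.mem_Icc.mp (hS hx); omega
        rw [hfS]
        push_cast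
        ring
      rw [Finset.sum_congr rfl key1]
      have key2 : ∀ S ∈ (Finset.Icc j t).powerset,
          (∏ i ∈ insert (t+1) S,
              (1 + (((insert (t+1) S).filter (fun i' => i' < i)).card : ℝ) * Δ)) *
            ∏ p ∈ insert (t + 1) (Finset.Icc j t) \ insert (t+1) S,
              (((p : ℝ) - 1) * (Δ + 1) -
                Δ * (((insert (t+1) S).filter (fun l => l ≤ p - 1)).card : ℝ))
          = (1 + (S.card : ℝ) * Δ) *
            ((∏ i ∈ S, (1 + ((S.filter (fun i' => i' < i)).card : ℝ) * Δ)) *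
            ∏ p ∈ Finset.Icc j t \ S,
              (((p : ℝ) - 1) * (Δ + 1) - Δ * ((S.filter (fun l => l ≤ p - 1)).card : ℝ))) := by
        intro S hS
        rw [Finset.mem_powerset] at hS
        have hmemS : ∀ x ∈ S, x ≤ t := fun x hx => (Finset.mem_Icc.mp (hS hx)).2
        have hns : (t + 1) ∉ S := fun h => by have := hmemS _ h; omega
        have hsd : insert (t + 1) (Finset.Icc j t) \ insert (t+1) S
            = Finset.Icc j t \ S := by
          rw [Finset.insert_sdiff_insert]
          rw [Finset.sdiff_insert_of_notMem hnotmem]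
        rw [hsd, Finset.prod_insert hns]
        have hf1 : (insert (t+1) S).filter (fun i' => i' < t + 1) = S := by
          rw [Finset.filter_insert]
          simp only [lt_self_iff_false, if_false]
          apply Finset.filter_true_of_mem
          intro x hx; have := hmemS _ hx; omega
        rw [hf1]
        have hf2 : ∀ i ∈ S, (insert (t+1) S).filter (fun i' => i' < i)
            = S.filter (fun i' => i' < i) := by
          intro i hi
          rw [Finset.filter_insert]
          have : ¬ (t + 1 < i) := by have := hmemS _ hi; omega
          simp [this]
        have hf3 : ∀ p ∈ Finset.Icc j t \ S, (insert (t+1) S).filter (fun l => l ≤ p - 1)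
            = S.filter (fun l => l ≤ p - 1) := by
          intro p hp
          have hpt : p ≤ t := (Finset.mem_Icc.mp (Finset.mem_sdiff.mp hp).1).2
          rw [Finset.filter_insert]
          have : ¬ (t + 1 ≤ p - 1) := by omega
          simp [this]
        have hp2 : ∏ x ∈ S, (1 + (((insert (t+1) S).filter (fun i' => i' < x)).card : ℝ) * Δ)
            = ∏ i ∈ S, (1 + ((S.filter (fun i' => i' < i)).card : ℝ) * Δ) :=
          Finset.prod_congr rfl (fun i hi => by rw [hf2 i hi])
        have hp3 : ∏ p ∈ Finset.Icc j t \ S,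
              (((p : ℝ) - 1) * (Δ + 1) -
                Δ * (((insert (t+1) S).filter (fun l => l ≤ p - 1)).card : ℝ))
            = ∏ p ∈ Finset.Icc j t \ S,
              (((p : ℝ) - 1) * (Δ + 1) - Δ * ((S.filter (fun l => l ≤ p - 1)).card : ℝ)) :=
          Finset.prod_congr rfl (fun p hp => by rw [hf3 p hp])
        rw [hp2, hp3]
        ring
      rw [Finset.sum_congr rfl key2]
      rw [← Finset.sum_add_distrib]
      have hcomb : ∀ S ∈ (Finset.Icc j t).powerset,
          ((∏ i ∈ S, (1 + ((S.filter (fun i' => i' < i)).card : ℝ) * Δ)) *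
            ∏ p ∈ Finset.Icc j t \ S,
              (((p : ℝ) - 1) * (Δ + 1) - Δ * ((S.filter (fun l => l ≤ p - 1)).card : ℝ)))
            * (((t : ℝ)) * (Δ + 1) - Δ * (S.card : ℝ)) +
          (1 + (S.card : ℝ) * Δ) *
            ((∏ i ∈ S, (1 + ((S.filter (fun i' => i' < i)).card : ℝ) * Δ)) *
            ∏ p ∈ Finset.Icc j t \ S,
              (((p : ℝ) - 1) * (Δ + 1) - Δ * ((S.filter (fun l => l ≤ p - 1)).card : ℝ)))
          = ((Δ + 1) * (t : ℝ) + 1) *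
            ((∏ i ∈ S, (1 + ((S.filter (fun i' => i' < i)).card : ℝ) * Δ)) *
            ∏ p ∈ Finset.Icc j t \ S,
              (((p : ℝ) - 1) * (Δ + 1) - Δ * ((S.filter (fun l => l ≤ p - 1)).card : ℝ))) := by
        intro S _; ring
      rw [Finset.sum_congr rfl hcomb, ← Finset.mul_sum, ih]
      have hIcc : Finset.Icc (j - 1) (t + 1 - 1) = insert t (Finset.Icc (j-1) (t-1)) := by
        ext x; simp [Finset.mem_Icc]; omega
      rw [hIcc, Finset.prod_insert (by simp [Finset.mem_Icc]; omega)]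


/-- the normalization identity for the constant-`Δ` expanding-color
Pólya urn.  Strictly increasing `k`-tuples `(i_1 < ⋯ < i_k)` in `[j,t]` are encoded as
`k`-element subsets `S` of `Icc j t`; then `∏_{a=1}^k (1 + (a-1)Δ)` becomes
`∏_{i ∈ S} (1 + #{i' ∈ S : i' < i}·Δ)`, and `#{l : i_l ≤ p-1}` becomes
`#(S.filter (· ≤ p-1))`. -/
theorem normalization_identity (Δ : ℝ) (hΔ : 0 < Δ) (t j : ℕ)
    (ht : 1 ≤ t) (hj1 : 1 ≤ j) (hjt : j ≤ t) :
    (∏ p ∈ Finset.Icc j t, ((p : ℝ) - 1) * (Δ + 1)) +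
        ∑ k ∈ Finset.Icc 1 (t - j + 1),
          ∑ S ∈ Finset.powersetCard k (Finset.Icc j t),
            (∏ i ∈ S, (1 + ((S.filter (fun i' => i' < i)).card : ℝ) * Δ)) *
              ∏ p ∈ Finset.Icc j t \ S,
                (((p : ℝ) - 1) * (Δ + 1) -
                  Δ * ((S.filter (fun l => l ≤ p - 1)).card : ℝ)) =
      ∏ n ∈ Finset.Icc (j - 1) (t - 1), ((Δ + 1) * (n : ℝ) + 1) := by
  rw [← aux_sum Δ j hj1 t hjt]
  rw [Finset.sum_powerset]
  have hcard : (Finset.Icc j t).card = t - j + 1 := by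
    rw [Nat.card_Icc]; omega
  rw [hcard]
  have hr : Finset.range (t - j + 1 + 1) = insert 0 (Finset.Icc 1 (t - j + 1)) := by
    ext x; simp [Finset.mem_Icc, Finset.mem_range]; omega
  rw [hr, Finset.sum_insert (by simp)]
  congr 1
  rw [Finset.powersetCard_zero, Finset.sum_singleton]
  simp
end
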